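/- arXiv:1506.02202 — 4 statements merged into one kernel-verified Lean document; each statement's English description precedes it below -/
import Mathlib

section
/- Let I be a proper closed ideal of H^∞(D) and let f_j = c_j + φ_j ∈ H^∞_I(D) (c_j ∈ ℂ, φ_j ∈ I) for j ∈ ℕ, satisfying ε² ≤ Σ_{j=1}^∞ |f_j(z)|² ≤ 1 for all z ∈ D, for some ε > 0. Then Σ_{j=1}^∞ |c_j|² ≤ 1. -/
open Complex

noncomputable section

/-- The open unit disk in `ℂ`. -/
def UnitDisk : Set ℂ := Metric.ball 0 1

/-- `f` belongs to `H^∞(𝔻)`: analytic and bounded on the open unit disk. -/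
def IsBddAnalytic (f : ℂ → ℂ) : Prop :=
  DifferentiableOn ℂ f UnitDisk ∧ ∃ M : ℝ, ∀ z ∈ UnitDisk, ‖f z‖ ≤ M

/-- `I` is a proper closed ideal of `H^∞(𝔻)` (closedness with respect to
uniform convergence on the disk). -/
structure IsProperClosedIdeal (I : Set (ℂ → ℂ)) : Prop where
  subset : ∀ φ ∈ I, IsBddAnalytic φ
  zero_mem : (fun _ => (0 : ℂ)) ∈ I
  add_mem : ∀ φ ∈ I, ∀ ψ ∈ I, (fun z => φ z + ψ z) ∈ I
  smul_mem : ∀ f, IsBddAnalytic f → ∀ φ ∈ I, (fun z => f z * φ z) ∈ I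
  proper : (fun _ => (1 : ℂ)) ∉ I
  closed : ∀ (φ : ℕ → ℂ → ℂ) (ψ : ℂ → ℂ), (∀ n, φ n ∈ I) → IsBddAnalytic ψ →
    (∀ ε : ℝ, 0 < ε → ∃ N, ∀ n ≥ N, ∀ z ∈ UnitDisk, ‖φ n z - ψ z‖ ≤ ε) → ψ ∈ I

/-- Membership in `H^∞_I(𝔻) = { c + φ : c ∈ ℂ, φ ∈ I }`. -/
def MemHI (I : Set (ℂ → ℂ)) (f : ℂ → ℂ) : Prop :=
  ∃ c : ℂ, ∃ φ ∈ I, f = fun z => c + φ z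

lemma const_bdd (a : ℂ) : IsBddAnalytic (fun _ => a) :=
  ⟨differentiableOn_const _, ‖a‖, fun _ _ => le_rfl⟩

lemma sum_mem_I {I : Set (ℂ → ℂ)} (hI : IsProperClosedIdeal I)
    (s : Finset ℕ) (a : ℕ → ℂ) (g : ℕ → ℂ → ℂ) (hg : ∀ j, g j ∈ I) :
    (fun z => ∑ j ∈ s, a j * g j z) ∈ I := by
  classical
  induction s using Finset.induction with
  | empty => simpa using hI.zero_mem
  | @insert k t hk ih =>
    have h1 := hI.smul_mem (fun _ => a k) (const_bdd _) _ (hg k)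
    have := hI.add_mem _ h1 _ ih
    simpa [Finset.sum_insert hk] using this

/-- If `f_j = c_j + φ_j ∈ H^∞_I(𝔻)` (`j ∈ ℕ`) satisfy
`ε² ≤ Σ_j |f_j(z)|² ≤ 1` on the disk for some `ε > 0`, then `Σ_j |c_j|² ≤ 1`. -/
theorem stmt2 (I : Set (ℂ → ℂ)) (hI : IsProperClosedIdeal I)
    (ε : ℝ) (hε : 0 < ε) (c : ℕ → ℂ) (φ : ℕ → ℂ → ℂ) (hφ : ∀ j, φ j ∈ I)
    (hlow : ∀ z ∈ UnitDisk, ε ^ 2 ≤ ∑' j, ‖c j + φ j z‖ ^ 2)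
    (hup : ∀ z ∈ UnitDisk, ∑' j, ‖c j + φ j z‖ ^ 2 ≤ 1) :
    ∑' j, ‖c j‖ ^ 2 ≤ 1 := by
  by_contra hcon
  push_neg at hcon
  have hsum : Summable (fun j => ‖c j‖ ^ 2) := by
    by_contra h
    rw [tsum_eq_zero_of_not_summable h] at hcon
    linarith
  obtain ⟨n, hn⟩ : ∃ n, 1 < ∑ j ∈ Finset.range n, ‖c j‖ ^ 2 :=
    (hsum.hasSum.tendsto_sum_nat.eventually (eventually_gt_nhds hcon)).exists
  set s : Finset ℕ := Finset.range n with hs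
  set S : ℝ := ∑ j ∈ s, ‖c j‖ ^ 2 with hS
  have hS1 : 1 < S := hn
  have hS0 : 0 < S := lt_trans one_pos hS1
  set χ : ℂ → ℂ := fun z => ∑ j ∈ s, (starRingEnd ℂ) (c j) * φ j z with hχ
  have hχI : χ ∈ I := sum_mem_I hI s _ φ hφ
  have hsummz : ∀ z ∈ UnitDisk, Summable (fun j => ‖c j + φ j z‖ ^ 2) := by
    intro z hz
    by_contra h
    have := hlow z hz
    rw [tsum_eq_zero_of_not_summable h] at this
    nlinarith
  have hkey : ∀ z : ℂ, (S : ℂ) + χ z = ∑ j ∈ s, (starRingEnd ℂ) (c j) * (c j + φ j z) := by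
    intro z
    have hcc : ((S : ℝ) : ℂ) = ∑ j ∈ s, (starRingEnd ℂ) (c j) * c j := by
      rw [hS]
      push_cast
      refine Finset.sum_congr rfl fun j _ => ?_
      rw [mul_comm, Complex.mul_conj, Complex.normSq_eq_norm_sq]
      norm_cast
    rw [hcc, ← Finset.sum_add_distrib]
    exact Finset.sum_congr rfl fun j _ => by ring
  have hbound : ∀ z ∈ UnitDisk, ‖(S : ℂ) + χ z‖ ≤ Real.sqrt S := by
    intro z hz
    rw [hkey z]
    calc ‖∑ j ∈ s, (starRingEnd ℂ) (c j) * (c j + φ j z)‖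
        ≤ ∑ j ∈ s, ‖(starRingEnd ℂ) (c j) * (c j + φ j z)‖ := norm_sum_le _ _
      _ = ∑ j ∈ s, ‖c j‖ * ‖c j + φ j z‖ := by
          refine Finset.sum_congr rfl fun j _ => ?_
          rw [norm_mul, RCLike.norm_conj]
      _ ≤ Real.sqrt (∑ j ∈ s, ‖c j‖ ^ 2) * Real.sqrt (∑ j ∈ s, ‖c j + φ j z‖ ^ 2) :=
          Real.sum_mul_le_sqrt_mul_sqrt _ _ _
      _ ≤ Real.sqrt S * 1 := by
          refine mul_le_mul_of_nonneg_left ?_ (Real.sqrt_nonneg _)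
          rw [show (1:ℝ) = Real.sqrt 1 by simp]
          apply Real.sqrt_le_sqrt
          calc ∑ j ∈ s, ‖c j + φ j z‖ ^ 2
              ≤ ∑' j, ‖c j + φ j z‖ ^ 2 :=
              Summable.sum_le_tsum s (fun j _ => by positivity) (hsummz z hz)
            _ ≤ 1 := hup z hz
      _ = Real.sqrt S := mul_one _
  set δ : ℝ := S - Real.sqrt S with hδ
  have hδ0 : 0 < δ := by
    have : Real.sqrt S < S := by
      rw [Real.sqrt_lt' hS0]
      nlinarith
    simp only [hδ]
    linarith
  have hχlow : ∀ z ∈ UnitDisk, δ ≤ ‖χ z‖ := by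
    intro z hz
    have h1 : ‖(S : ℂ)‖ - ‖(S : ℂ) + χ z‖ ≤ ‖(S : ℂ) - ((S : ℂ) + χ z)‖ :=
      norm_sub_norm_le _ _
    have h2 : (S : ℂ) - ((S : ℂ) + χ z) = -χ z := by ring
    have h3 : ‖(S : ℂ)‖ = S := by
      rw [Complex.norm_real, Real.norm_of_nonneg hS0.le]
    rw [h2, norm_neg, h3] at h1
    have := hbound z hz
    simp only [hδ]
    linarith
  -- χ is differentiable on the disk
  have hχdiff : DifferentiableOn ℂ χ UnitDisk := by
    apply DifferentiableOn.fun_sum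
    intro j _
    exact (differentiableOn_const _).mul (hI.subset _ (hφ j)).1
  have hχne : ∀ z ∈ UnitDisk, χ z ≠ 0 := by
    intro z hz h0
    have := hχlow z hz
    rw [h0, norm_zero] at this
    linarith
  -- the inverse is bounded analytic
  have hinv : IsBddAnalytic (fun z => (χ z)⁻¹) := by
    constructor
    · exact hχdiff.inv hχne
    · refine ⟨δ⁻¹, fun z hz => ?_⟩
      rw [norm_inv]
      exact inv_anti₀ hδ0 (hχlow z hz)
  have hmem : (fun z => (χ z)⁻¹ * χ z) ∈ I := hI.smul_mem _ hinv _ hχI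
  have hone : (fun _ => (1 : ℂ)) ∈ I := by
    apply hI.closed (fun _ => fun z => (χ z)⁻¹ * χ z) _ (fun _ => hmem) (const_bdd 1)
    intro ε' hε'
    refine ⟨0, fun m _ z hz => ?_⟩
    rw [inv_mul_cancel₀ (hχne z hz)]
    simpa using hε'.le
  exact hI.proper hone
end
end

section
/- Let F = (f₁, …, f_n) and D = (d₁, …, d_n) be row vectors of complex numbers and Q_F, Q_D the associated n × (n choose 2) matrices (column indexed by i < j, with f_j in row i and −f_i in row j, respectively d_j and −d_i). Then (F Dᵀ) I_n − Dᵀ F = Q_F Q_Dᵀ. -/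
open Matrix

/-- Column index set for the matrix `Q_F`: pairs `(i,j)` with `i < j`. -/
def PairIdx (n : ℕ) : Type := { p : Fin n × Fin n // p.1 < p.2 }
instance (n : ℕ) : Fintype (PairIdx n) := Subtype.fintype _
/-- The `n × (n choose 2)` matrix `Q_F`: column `(i,j)` (with `i < j`) has entry
`f j` in row `i`, entry `−f i` in row `j`, and `0` elsewhere. -/
def QMat {n : ℕ} (f : Fin n → ℂ) : Matrix (Fin n) (PairIdx n) ℂ :=
  fun r p => if r = p.1.1 then f p.1.2 else if r = p.1.2 then -f p.1.1 else 0

/-- `(F Dᵀ) I_n − Dᵀ F = Q_F Q_Dᵀ`, where `F Dᵀ = Σ f_k d_k` and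
`Dᵀ F` has `(k,l)` entry `d k * f l`; `Q_Dᵀ` is the (unconjugated) transpose. -/
theorem stmt10 {n : ℕ} (f d : Fin n → ℂ) :
    (∑ k, f k * d k) • (1 : Matrix (Fin n) (Fin n) ℂ) -
      Matrix.of (fun k l => d k * f l) = QMat f * (QMat d)ᵀ := by
  ext k l
  set A : Fin n → Fin n → ℂ := fun i j =>
    ((if k = i then f j else 0) - (if k = j then f i else 0)) *
    ((if l = i then d j else 0) - (if l = j then d i else 0)) with hA
  have hstep : ∀ p : PairIdx n, QMat f k p * QMat d l p = A p.1.1 p.1.2 := by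
    rintro ⟨⟨i, j⟩, hij⟩
    have hne : i ≠ j := ne_of_lt hij
    simp only [QMat, hA]
    split_ifs <;> simp_all <;> ring
  have hsub : (∑ p : PairIdx n, A p.1.1 p.1.2) =
      ∑ p ∈ Finset.univ.filter (fun p : Fin n × Fin n => p.1 < p.2), A p.1 p.2 := by
    exact (Finset.sum_subtype (p := fun p : Fin n × Fin n => p.1 < p.2) _
      (fun x => by simp) (fun p => A p.1 p.2)).symm
  have hdiag : ∀ i : Fin n, A i i = 0 := by intro i; simp only [hA]; ring
  have hsymm : ∀ i j : Fin n, A j i = A i j := by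
    intro i j; simp only [hA]; ring
  have hswap : (∑ p ∈ Finset.univ.filter (fun p : Fin n × Fin n => p.2 < p.1), A p.1 p.2)
      = ∑ p ∈ Finset.univ.filter (fun p : Fin n × Fin n => p.1 < p.2), A p.1 p.2 := by
    refine Finset.sum_nbij' (fun p => Prod.swap p) (fun p => Prod.swap p) ?_ ?_ ?_ ?_ ?_
    · rintro ⟨i, j⟩ h; simp_all
    · rintro ⟨i, j⟩ h; simp_all
    · rintro ⟨i, j⟩ h; rfl
    · rintro ⟨i, j⟩ h; rfl
    · rintro ⟨i, j⟩ h; exact hsymm j i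
  have htotal : (∑ p : Fin n × Fin n, A p.1 p.2)
      = (∑ p ∈ Finset.univ.filter (fun p : Fin n × Fin n => p.1 < p.2), A p.1 p.2)
      + (∑ p ∈ Finset.univ.filter (fun p : Fin n × Fin n => p.2 < p.1), A p.1 p.2) := by
    rw [← Finset.sum_filter_add_sum_filter_not Finset.univ (fun p : Fin n × Fin n => p.1 < p.2)]
    congr 1
    refine (Finset.sum_subset ?_ ?_).symm
    · rintro ⟨i, j⟩ h
      simp only [Finset.mem_filter, Finset.mem_univ, true_and] at h ⊢
      exact lt_asymm h
    · rintro ⟨i, j⟩ h1 h2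
      simp only [Finset.mem_filter, Finset.mem_univ, true_and, not_lt] at h1 h2
      have : i = j := le_antisymm h2 h1
      subst this
      exact hdiag i
  have hsum : (∑ p : Fin n × Fin n, A p.1 p.2)
      = 2 * ((if k = l then ∑ m, f m * d m else 0) - d k * f l) := by
    rw [Fintype.sum_prod_type]
    simp only [hA, sub_mul, mul_sub, ite_mul, mul_ite, zero_mul, mul_zero,
      Finset.sum_sub_distrib, Finset.sum_ite_irrel, Finset.sum_ite_eq,
      Finset.sum_ite_eq', Finset.mem_univ, if_true, Finset.sum_const_zero]
    split_ifs with h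
    · subst h; ring
    · ring
  have key : (∑ p ∈ Finset.univ.filter (fun p : Fin n × Fin n => p.1 < p.2), A p.1 p.2)
      = (if k = l then ∑ m, f m * d m else 0) - d k * f l := by
    have h2 : (2:ℂ) * (∑ p ∈ Finset.univ.filter (fun p : Fin n × Fin n => p.1 < p.2), A p.1 p.2)
        = 2 * ((if k = l then ∑ m, f m * d m else 0) - d k * f l) := by
      rw [← hsum, htotal, hswap]; ring
    exact mul_left_cancel₀ two_ne_zero h2
  simp only [Matrix.sub_apply, Matrix.smul_apply, Matrix.one_apply, Matrix.of_apply,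
    smul_eq_mul, Matrix.mul_apply, Matrix.transpose_apply]
  rw [Finset.sum_congr rfl (fun p _ => hstep p), hsub, key]
  split_ifs <;> ring
end

section
/- Let a = (a_j)_{j≥1} ∈ ℓ². Then the operator Q_A : ⊕_{k=1}^∞ ℓ² → ℓ² whose k-th block A_k sends e_m (m ≥ 1) to a_{k+m} e_k − a_k e_{k+m}, satisfies Σ_{k=1}^∞ A_k A_k* = (Σ_j |a_j|²) I_{ℓ²} − A* A, where A : ℓ² → ℂ is the functional A x = Σ_j a_j x_j; equivalently Q_A Q_A* = (A A*) I_{ℓ²} − A* A. -/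
/-!
Column `(k, m)` of `Q_A` is `a l • e k - a k • e l` with `l = k + m + 1`, so columns correspond to
pairs `k < l`. Off the diagonal, only the column of the pair `{i, j}` meets both rows `i` and `j`,
which gives `-conj (a i) * a j`. On the diagonal, row `i` collects `‖a l‖²` from the columns with
`k = i` and `‖a k‖²` from those with `l = i`, i.e. every `‖a n‖²` with `n ≠ i` exactly once
(Lagrange's identity).
-/

open Complex

noncomputable section

/-- Entry in row `i`, column `(k,m)` of the block operator `Q_A`:
the block `A_k` sends the basis vector `e m` to `a (k+m+1) • e k - a k • e (k+m+1)`
(a 0-based version of the paper's 1-based construction). -/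
def Qent (a : ℕ → ℂ) (k i m : ℕ) : ℂ :=
  (if i = k then a (k + m + 1) else 0) + (if i = k + m + 1 then -a k else 0)

open ComplexConjugate

section HasSumSlices

variable {M : Type*} [AddCommMonoid M] [TopologicalSpace M]

theorem HasSum.ite_fst_eq {α β : Type*} [DecidableEq α] {f : β → M} {s : M} (hf : HasSum f s)
    (i : α) : HasSum (fun p : α × β => if p.1 = i then f p.2 else 0) s := by
  refine ((Prod.mk_right_injective i).hasSum_iff ?_).1 (by simpa [Function.comp_def] using hf)
  rintro ⟨k, m⟩ hp
  exact if_neg fun (hk : k = i) => hp ⟨m, by rw [hk]⟩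

theorem hasSum_ite_add_add_one_eq (g : ℕ → M) (i : ℕ) :
    HasSum (fun p : ℕ × ℕ => if p.1 + p.2 + 1 = i then g p.1 else 0)
      (∑ k ∈ Finset.range i, g k) := by
  have hinj : Function.Injective fun k : ℕ => (k, i - k - 1) := fun _ _ h => (Prod.ext_iff.1 h).1
  refine (hinj.hasSum_iff ?_).1 ?_
  · rintro ⟨k, m⟩ hp
    exact if_neg fun (hkm : k + m + 1 = i) => hp ⟨k, Prod.ext rfl (by dsimp only; omega)⟩
  · have hsum := hasSum_sum_of_ne_finset_zero (L := .unconditional ℕ) (s := Finset.range i)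
      (f := fun k => if k + (i - k - 1) + 1 = i then g k else 0)
      fun k hk => if_neg (by rw [Finset.mem_range] at hk; omega)
    rwa [Finset.sum_congr rfl fun k hk => if_pos (by rw [Finset.mem_range] at hk; omega)] at hsum

end HasSumSlices

lemma Qent_eq_zero (a : ℕ → ℂ) {k i m : ℕ} (hk : i ≠ k) (hkm : i ≠ k + m + 1) :
    Qent a k i m = 0 := by
  simp [Qent, hk, hkm]

lemma Qent_self (a : ℕ → ℂ) (k m : ℕ) : Qent a k k m = a (k + m + 1) := by
  rw [Qent, if_pos rfl, if_neg (by omega), add_zero]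

lemma Qent_add_add_one (a : ℕ → ℂ) (k m : ℕ) : Qent a k (k + m + 1) m = -a k := by
  rw [Qent, if_neg (by omega), if_pos rfl, zero_add]

lemma norm_Qent_sq (a : ℕ → ℂ) (k i m : ℕ) :
    ‖Qent a k i m‖ ^ 2 =
      (if k = i then ‖a (m + (i + 1))‖ ^ 2 else 0) + (if k + m + 1 = i then ‖a k‖ ^ 2 else 0) := by
  by_cases hk : k = i
  · subst hk
    rw [Qent_self, if_pos rfl, if_neg (by omega), add_zero, show k + m + 1 = m + (k + 1) by omega]
  · by_cases hkm : k + m + 1 = i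
    · subst hkm
      rw [Qent_add_add_one, if_neg hk, if_pos rfl, zero_add, norm_neg]
    · rw [Qent_eq_zero a (Ne.symm hk) (Ne.symm hkm), if_neg hk, if_neg hkm]
      simp

theorem hasSum_norm_Qent_sq {a : ℕ → ℂ} (ha : Summable fun j => ‖a j‖ ^ 2) (i : ℕ) :
    HasSum (fun p : ℕ × ℕ => ‖Qent a p.1 i p.2‖ ^ 2) ((∑' n, ‖a n‖ ^ 2) - ‖a i‖ ^ 2) := by
  have htail := ((hasSum_nat_add_iff' (i + 1)).2 ha.hasSum).ite_fst_eq i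
  have hhead := hasSum_ite_add_add_one_eq (fun k => ‖a k‖ ^ 2) i
  have hval : (∑' n, ‖a n‖ ^ 2) - ∑ k ∈ Finset.range (i + 1), ‖a k‖ ^ 2 +
      ∑ k ∈ Finset.range i, ‖a k‖ ^ 2 = (∑' n, ‖a n‖ ^ 2) - ‖a i‖ ^ 2 := by
    rw [Finset.sum_range_succ]
    ring
  simpa only [← norm_Qent_sq, hval] using htail.add hhead

lemma Qent_mul_conj_Qent_add_add_one_eq_zero (a : ℕ → ℂ) {i m k l : ℕ} (hkl : (k, l) ≠ (i, m)) :
    Qent a k i l * conj (Qent a k (i + m + 1) l) = 0 := by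
  by_cases hi : i = k ∨ i = k + l + 1
  · by_cases hj : i + m + 1 = k ∨ i + m + 1 = k + l + 1
    · exfalso
      rcases hi with hi | hi <;> rcases hj with hj | hj <;> try omega
      exact hkl (Prod.ext hi.symm (by dsimp only; omega))
    · push Not at hj
      rw [Qent_eq_zero a hj.1 hj.2, map_zero, mul_zero]
  · push Not at hi
    rw [Qent_eq_zero a hi.1 hi.2, zero_mul]

theorem tsum_Qent_mul_conj_of_lt (a : ℕ → ℂ) {i j : ℕ} (hij : i < j) :
    ∑' p : ℕ × ℕ, Qent a p.1 i p.2 * conj (Qent a p.1 j p.2) = -conj (a i) * a j := by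
  obtain ⟨m, rfl⟩ : ∃ m, j = i + m + 1 := ⟨j - i - 1, by omega⟩
  rw [tsum_eq_single (i, m) fun p hp => Qent_mul_conj_Qent_add_add_one_eq_zero a hp,
    Qent_self, Qent_add_add_one, map_neg]
  ring

theorem tsum_Qent_mul_conj_of_ne (a : ℕ → ℂ) {i j : ℕ} (hij : i ≠ j) :
    ∑' p : ℕ × ℕ, Qent a p.1 i p.2 * conj (Qent a p.1 j p.2) = -conj (a i) * a j := by
  rcases hij.lt_or_gt with hij | hji
  · exact tsum_Qent_mul_conj_of_lt a hij
  · have hsymm : ∑' p : ℕ × ℕ, Qent a p.1 i p.2 * conj (Qent a p.1 j p.2) =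
        conj (∑' p : ℕ × ℕ, Qent a p.1 j p.2 * conj (Qent a p.1 i p.2)) := by
      rw [conj_tsum]
      exact tsum_congr fun p => by rw [map_mul, conj_conj, mul_comm]
    rw [hsymm, tsum_Qent_mul_conj_of_lt a hji, map_mul, map_neg, conj_conj, mul_comm, mul_neg,
      neg_mul]

/-- For `a ∈ ℓ²`, the blocks `A_k` of `Q_A` satisfy
`Σ_k A_k A_k* = (Σ_j |a_j|²) I − A* A`, i.e. `Q_A Q_A* = (A A*) I − A* A`,
stated entrywise: the `(i,j)` entry of `Σ_k A_k A_k*` is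
`(Σ_n |a_n|²) δ_{ij} − conj (a i) * a j`. -/
theorem stmt11 (a : ℕ → ℂ) (ha : Summable fun j => ‖a j‖ ^ 2) :
    ∀ i j : ℕ,
      (∑' p : ℕ × ℕ, Qent a p.1 i p.2 * (starRingEnd ℂ) (Qent a p.1 j p.2)) =
        ((∑' n, ‖a n‖ ^ 2 : ℝ) : ℂ) * (if i = j then 1 else 0) -
          (starRingEnd ℂ) (a i) * a j := by
  intro i j
  obtain rfl | hij := eq_or_ne i j
  · rw [if_pos rfl, mul_one, conj_mul', ← ofReal_pow, ← ofReal_sub,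
      ← (hasSum_ofReal.2 (hasSum_norm_Qent_sq ha i)).tsum_eq]
    exact tsum_congr fun p => by rw [mul_conj', ofReal_pow]
  · rw [tsum_Qent_mul_conj_of_ne a hij, if_neg hij, mul_zero, zero_sub, neg_mul]
end
end

section
/- Let a = (a_j) ∈ ℓ² and d = (d_j) ∈ ℓ², with A, D : ℓ² → ℂ the functionals A x = Σ a_j x_j, D x = Σ d_j x_j, and Q_A, Q_D the associated block operators (A_k e_m = a_{k+m} e_k − a_k e_{k+m}, similarly for D). Then (A Dᵀ) I_{ℓ²} − Dᵀ A = Q_A Q_Dᵀ as bounded operators on ℓ², where A Dᵀ = Σ_j a_j d_j and Dᵀ A is the operator with matrix entries d_i a_j. -/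
open Complex

noncomputable section

/-- For `a, d ∈ ℓ²`, `(A Dᵀ) I − Dᵀ A = Q_A Q_Dᵀ` as operators on
`ℓ²`, stated entrywise: the `(i,j)` entry of `Q_A Q_Dᵀ` is
`(Σ_k a_k d_k) δ_{ij} − d_i a_j`. -/
theorem stmt18 (a d : ℕ → ℂ) (ha : Summable fun j => ‖a j‖ ^ 2)
    (hd : Summable fun j => ‖d j‖ ^ 2) :
    ∀ i j : ℕ,
      (∑' p : ℕ × ℕ, Qent a p.1 i p.2 * Qent d p.1 j p.2) =
        (∑' k, a k * d k) * (if i = j then 1 else 0) - d i * a j := by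
  intro i j
  have hS : Summable (fun n => a n * d n) := by
    apply Summable.of_norm
    apply Summable.of_nonneg_of_le (fun n => norm_nonneg _) (fun n => ?_)
      ((ha.add hd).div_const 2)
    rw [norm_mul]
    nlinarith [norm_nonneg (a n), norm_nonneg (d n), sq_nonneg (‖a n‖ - ‖d n‖)]
  -- the four pieces of the product
  set g1 : ℕ × ℕ → ℂ := fun p =>
    (if i = p.1 then a (p.1 + p.2 + 1) else 0) * (if j = p.1 then d (p.1 + p.2 + 1) else 0)
    with hg1
  set g2 : ℕ × ℕ → ℂ := fun p =>
    (if i = p.1 then a (p.1 + p.2 + 1) else 0) * (if j = p.1 + p.2 + 1 then d p.1 else 0)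
    with hg2
  set g3 : ℕ × ℕ → ℂ := fun p =>
    (if i = p.1 + p.2 + 1 then a p.1 else 0) * (if j = p.1 then d (p.1 + p.2 + 1) else 0)
    with hg3
  set g4 : ℕ × ℕ → ℂ := fun p =>
    (if i = p.1 + p.2 + 1 then a p.1 else 0) * (if j = p.1 + p.2 + 1 then d p.1 else 0)
    with hg4
  have key : ∀ p : ℕ × ℕ, Qent a p.1 i p.2 * Qent d p.1 j p.2 =
      g1 p - g2 p - g3 p + g4 p := by
    intro p
    simp only [Qent, hg1, hg2, hg3, hg4]
    split_ifs <;> ring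
  rcases eq_or_ne i j with rfl | hij
  · -- diagonal case
    have h2 : ∀ p : ℕ × ℕ, g2 p = 0 := by
      intro p
      rcases eq_or_ne i p.1 with h | h
      · rw [hg2]; dsimp only
        rw [if_neg (by omega : ¬ i = p.1 + p.2 + 1), mul_zero]
      · rw [hg2]; dsimp only; rw [if_neg h, zero_mul]
    have h3 : ∀ p : ℕ × ℕ, g3 p = 0 := by
      intro p
      rcases eq_or_ne i p.1 with h | h
      · rw [hg3]; dsimp only
        rw [if_neg (by omega : ¬ i = p.1 + p.2 + 1), zero_mul]
      · rw [hg3]; dsimp only; rw [mul_comm, if_neg h, zero_mul]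
    have key' : ∀ p : ℕ × ℕ, Qent a p.1 i p.2 * Qent d p.1 i p.2 = g1 p + g4 p := by
      intro p; rw [key p, h2 p, h3 p]; ring
    -- g1 : supported on {i} × ℕ
    have e_inj : Function.Injective (fun m : ℕ => ((i, m) : ℕ × ℕ)) := by
      intro x y h; simpa using h
    have h1supp : Function.support g1 ⊆ Set.range (fun m : ℕ => ((i, m) : ℕ × ℕ)) := by
      intro p hp
      rcases eq_or_ne i p.1 with h | h
      · exact ⟨p.2, by rw [Prod.ext_iff]; exact ⟨h, rfl⟩⟩
      · exfalso; apply hp; rw [hg1]; dsimp only; rw [if_neg h, zero_mul]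
    have hcomp : ∀ m : ℕ, g1 (i, m) = a (m + (i + 1)) * d (m + (i + 1)) := by
      intro m
      rw [hg1]; dsimp only
      rw [if_pos rfl, if_pos rfl, show i + m + 1 = m + (i + 1) from by omega]
    have hsum1 : Summable g1 := by
      rw [← e_inj.summable_iff (fun p hp => by
        by_contra h; exact hp (h1supp h))]
      exact ((summable_nat_add_iff (i + 1)).2 hS).congr (fun m => (hcomp m).symm)
    have ht1 : ∑' p : ℕ × ℕ, g1 p =
        (∑' k, a k * d k) - ∑ k ∈ Finset.range (i + 1), a k * d k := by
      rw [← e_inj.tsum_eq h1supp]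
      have := Summable.sum_add_tsum_nat_add (f := fun n => a n * d n) (i + 1) hS
      have h' : ∑' (m : ℕ), g1 (i, m) = ∑' (m : ℕ), a (m + (i + 1)) * d (m + (i + 1)) :=
        tsum_congr hcomp
      rw [h']
      linear_combination this
    -- g4 : finite support
    set s : Finset (ℕ × ℕ) := (Finset.range i).image (fun k => (k, i - k - 1)) with hs
    have h4supp : ∀ p ∉ s, g4 p = 0 := by
      intro p hp
      rcases eq_or_ne i (p.1 + p.2 + 1) with h | h
      · exfalso
        apply hp
        rw [hs]
        exact Finset.mem_image.2 ⟨p.1, Finset.mem_range.2 (by omega),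
          by rw [Prod.ext_iff]; exact ⟨rfl, by omega⟩⟩
      · rw [hg4]; dsimp only; rw [if_neg h, zero_mul]
    have hsum4 : Summable g4 := summable_of_ne_finset_zero h4supp
    have ht4 : ∑' p : ℕ × ℕ, g4 p = ∑ k ∈ Finset.range i, a k * d k := by
      rw [tsum_eq_sum h4supp, hs]
      rw [Finset.sum_image (by intro x _ y _ h; exact (Prod.ext_iff.1 h).1)]
      apply Finset.sum_congr rfl
      intro k hk
      have hk' : i = k + (i - k - 1) + 1 := by rw [Finset.mem_range] at hk; omega
      rw [hg4]; dsimp only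
      rw [if_pos hk', if_pos hk']
    have : (∑' p : ℕ × ℕ, Qent a p.1 i p.2 * Qent d p.1 i p.2) =
        (∑' p : ℕ × ℕ, g1 p) + ∑' p : ℕ × ℕ, g4 p := by
      rw [← Summable.tsum_add hsum1 hsum4]
      exact tsum_congr key'
    rw [this, ht1, ht4, if_pos rfl, Finset.sum_range_succ]
    ring
  · -- off-diagonal case
    have h1 : ∀ p : ℕ × ℕ, g1 p = 0 := by
      intro p
      rcases eq_or_ne i p.1 with h | h
      · rw [hg1]; dsimp only; rw [mul_comm, if_neg (by omega : ¬ j = p.1), zero_mul]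
      · rw [hg1]; dsimp only; rw [if_neg h, zero_mul]
    have h4 : ∀ p : ℕ × ℕ, g4 p = 0 := by
      intro p
      rcases eq_or_ne i (p.1 + p.2 + 1) with h | h
      · rw [hg4]; dsimp only; rw [mul_comm, if_neg (by omega : ¬ j = p.1 + p.2 + 1), zero_mul]
      · rw [hg4]; dsimp only; rw [if_neg h, zero_mul]
    have key' : ∀ p : ℕ × ℕ, Qent a p.1 i p.2 * Qent d p.1 j p.2 = -(g2 p + g3 p) := by
      intro p; rw [key p, h1 p, h4 p]; ring
    rw [tsum_congr key', if_neg hij, mul_zero, zero_sub]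
    rcases lt_or_gt_of_ne hij with hlt | hgt
    · -- i < j : only g2 contributes, at the point (i, j - i - 1)
      have h3 : ∀ p : ℕ × ℕ, g3 p = 0 := by
        intro p
        rcases eq_or_ne j p.1 with h | h
        · rw [hg3]; dsimp only; rw [if_neg (by omega : ¬ i = p.1 + p.2 + 1), zero_mul]
        · rw [hg3]; dsimp only; rw [mul_comm, if_neg h, zero_mul]
      have : ∑' p : ℕ × ℕ, -(g2 p + g3 p) = -(g2 (i, j - i - 1)) := by
        rw [tsum_eq_single ((i, j - i - 1) : ℕ × ℕ) ?_, h3]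
        · ring
        · intro p hp
          rw [h3 p]
          rcases eq_or_ne i p.1 with h | h
          · rcases eq_or_ne j (p.1 + p.2 + 1) with h' | h'
            · exact absurd (by rw [Prod.ext_iff]; constructor <;> omega) hp
            · rw [hg2]; dsimp only; rw [if_neg h', mul_zero]; ring
          · rw [hg2]; dsimp only; rw [if_neg h, zero_mul]; ring
      rw [this, hg2]; dsimp only
      rw [if_pos rfl, if_pos (by omega : j = i + (j - i - 1) + 1),
        show i + (j - i - 1) + 1 = j from by omega]
      ring
    · -- j < i : only g3 contributes, at the point (j, i - j - 1)
      have h2 : ∀ p : ℕ × ℕ, g2 p = 0 := by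
        intro p
        rcases eq_or_ne i p.1 with h | h
        · rw [hg2]; dsimp only; rw [if_neg (by omega : ¬ j = p.1 + p.2 + 1), mul_zero]
        · rw [hg2]; dsimp only; rw [if_neg h, zero_mul]
      have : ∑' p : ℕ × ℕ, -(g2 p + g3 p) = -(g3 (j, i - j - 1)) := by
        rw [tsum_eq_single ((j, i - j - 1) : ℕ × ℕ) ?_, h2]
        · ring
        · intro p hp
          rw [h2 p]
          rcases eq_or_ne j p.1 with h | h
          · rcases eq_or_ne i (p.1 + p.2 + 1) with h' | h'
            · exact absurd (by rw [Prod.ext_iff]; constructor <;> omega) hp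
            · rw [hg3]; dsimp only; rw [if_neg h', zero_mul]; ring
          · rw [hg3]; dsimp only; rw [mul_comm, if_neg h, zero_mul]; ring
      rw [this, hg3]; dsimp only
      rw [if_pos rfl, if_pos (by omega : i = j + (i - j - 1) + 1),
        show j + (i - j - 1) + 1 = i from by omega]
      ring
end
end
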